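/- arXiv:1803.06007 — 3 statements merged into one kernel-verified Lean document; each statement's English description precedes it below -/
import Mathlib

section
/- Let ρ ∈ [0,1]^K with Σ_k ρ_k = 1 and let αₙ ∈ (0,1) be a sequence with lim_n αₙ = 0. Then for all n large enough, (αₙ²/2)·(1 + √αₙ)·χ_{αₙ}(ρ) ≥ D(Q_{αₙ}‖Q_∅) ≥ (αₙ²/2)·(1 − √αₙ)·χ_{αₙ}(ρ). -/
open Finset Filter
open scoped Topology

noncomputable section

/-- `P` is a probability distribution on the finite type `Z`. -/
def IsDist {Z : Type*} [Fintype Z] (P : Z → ℝ) : Prop :=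
  (∀ z, 0 ≤ P z) ∧ ∑ z, P z = 1

/-- Kullback–Leibler divergence `D(P‖Q)` (natural logarithm). -/
def klDiv {Z : Type*} [Fintype Z] (P Q : Z → ℝ) : ℝ :=
  ∑ z, P z * Real.log (P z / Q z)

/-- `P` is absolutely continuous w.r.t. `Q`. -/
def AbsCont {Z : Type*} (P Q : Z → ℝ) : Prop :=
  ∀ z, Q z = 0 → P z = 0

/-- The output mixture `Q_α(z) = Σ_{T⊆[K]} (∏_{k∈T} ρ_k α)(∏_{k∉T}(1-ρ_k α)) Q_T(z)`. -/
def Qmix {K : ℕ} {Z : Type*} [Fintype Z] (Q : Finset (Fin K) → Z → ℝ) (ρ : Fin K → ℝ)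
    (α : ℝ) (z : Z) : ℝ :=
  ∑ T : Finset (Fin K), (∏ k ∈ T, ρ k * α) * (∏ k ∈ Tᶜ, (1 - ρ k * α)) * Q T z

/-- `ζ_α(z) := (Q_α(z) - Q_∅(z))/α`. -/
def zetaMix {K : ℕ} {Z : Type*} [Fintype Z] (Q : Finset (Fin K) → Z → ℝ) (ρ : Fin K → ℝ)
    (α : ℝ) (z : Z) : ℝ :=
  (Qmix Q ρ α z - Q ∅ z) / α

/-- `χ_α(ρ) := Σ_z ζ_α(z)²/Q_∅(z)`. -/
def chiMix {K : ℕ} {Z : Type*} [Fintype Z] (Q : Finset (Fin K) → Z → ℝ) (ρ : Fin K → ℝ)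
    (α : ℝ) : ℝ :=
  ∑ z, (zetaMix Q ρ α z) ^ 2 / Q ∅ z

/-!
On the support of `Q_∅` write `Q_α = Q_∅ (1 + u)`. Since `∑ Q_∅ u = 0`,
`D(Q_α‖Q_∅) = ∑ Q_∅ ((1 + u) log (1 + u) - u)`, while `(α²/2) χ_α = ∑ Q_∅ u² / 2`,
and `(1 + u) log (1 + u) - u = u² / 2 + O(|u|³)`. The weights of the `Q_T` with `T ≠ ∅`
in `Q_α` add up to at most `α`, so `|u| ≤ α / Q_∅(z)`, which is below `√α / 8` once `α` is small;
the cubic error is then at most `√α` times the quadratic term.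
-/

lemma abs_one_add_mul_log_one_add_sub_le {u : ℝ} (hu : |u| ≤ 1 / 2) :
    |(1 + u) * Real.log (1 + u) - u - u ^ 2 / 2| ≤ 4 * |u| ^ 3 := by
  have hu0 := abs_nonneg u
  have hlog : |Real.log (1 + u) - (u - u ^ 2 / 2)| ≤ 2 * |u| ^ 3 := by
    have h := Real.abs_log_sub_add_sum_range_le (x := -u) (by rw [abs_neg]; linarith) 2
    norm_num [sum_range_succ] at h
    calc |Real.log (1 + u) - (u - u ^ 2 / 2)|
        = |-u + u ^ 2 / 2 + Real.log (1 + u)| := by ring_nf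
      _ ≤ |u| ^ 3 / (1 - |u|) := h
      _ ≤ 2 * |u| ^ 3 := by
        rw [div_le_iff₀ (by linarith)]
        nlinarith [mul_nonneg (pow_nonneg hu0 3) (by linarith : 0 ≤ 1 - 2 * |u|)]
  have h1u : |1 + u| ≤ 3 / 2 := by
    rw [abs_le] at hu ⊢; constructor <;> linarith
  calc |(1 + u) * Real.log (1 + u) - u - u ^ 2 / 2|
      = |(1 + u) * (Real.log (1 + u) - (u - u ^ 2 / 2)) - u ^ 3 / 2| := by ring_nf
    _ ≤ |1 + u| * |Real.log (1 + u) - (u - u ^ 2 / 2)| + |u| ^ 3 / 2 := by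
      rw [← abs_mul, show |u| ^ 3 / 2 = |u ^ 3 / 2| by rw [abs_div, abs_pow]; norm_num]
      exact abs_sub _ _
    _ ≤ 3 / 2 * (2 * |u| ^ 3) + |u| ^ 3 / 2 := by gcongr
    _ = 7 / 2 * |u| ^ 3 := by ring
    _ ≤ 4 * |u| ^ 3 := by gcongr; norm_num

theorem abs_mul_log_div_sub_le {p q δ : ℝ} (hδ0 : 0 ≤ δ) (hδ : δ ≤ 1 / 2)
    (hpq : |p - q| ≤ δ * q) :
    |p * Real.log (p / q) - (p - q) - (p - q) ^ 2 / (2 * q)| ≤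
      8 * δ * ((p - q) ^ 2 / (2 * q)) := by
  rcases le_or_gt q 0 with hq | hq
  · have : p = q :=
      sub_eq_zero.1 (abs_nonpos_iff.1 (hpq.trans (mul_nonpos_of_nonneg_of_nonpos hδ0 hq)))
    simp [this]
  obtain ⟨u, rfl⟩ : ∃ u, p = q * (1 + u) := ⟨(p - q) / q, by field_simp; ring⟩
  have hu : |u| ≤ δ := by
    rw [show q * (1 + u) - q = q * u by ring, abs_mul, abs_of_pos hq] at hpq
    exact le_of_mul_le_mul_left (by linarith) hq
  have hcubic := abs_one_add_mul_log_one_add_sub_le (hu.trans hδ)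
  calc |q * (1 + u) * Real.log (q * (1 + u) / q) - (q * (1 + u) - q)
        - (q * (1 + u) - q) ^ 2 / (2 * q)|
      = q * |(1 + u) * Real.log (1 + u) - u - u ^ 2 / 2| := by
        rw [mul_div_cancel_left₀ _ hq.ne', ← abs_of_pos hq, ← abs_mul, abs_of_pos hq]
        congr 1; field_simp; ring
    _ ≤ q * (4 * |u| ^ 3) := by gcongr
    _ ≤ q * (4 * δ * u ^ 2) := by
        have : |u| ^ 3 ≤ u ^ 2 * δ := by
          rw [pow_succ, sq_abs]; exact mul_le_mul_of_nonneg_left hu (sq_nonneg u)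
        gcongr q * ?_; linarith
    _ = 8 * δ * ((q * (1 + u) - q) ^ 2 / (2 * q)) := by field_simp; ring

theorem abs_klDiv_sub_le {Z : Type*} [Fintype Z] {P Q : Z → ℝ} {δ : ℝ}
    (hsum : ∑ z, P z = ∑ z, Q z) (hδ0 : 0 ≤ δ) (hδ : δ ≤ 1 / 2)
    (hPQ : ∀ z, |P z - Q z| ≤ δ * Q z) :
    |klDiv P Q - ∑ z, (P z - Q z) ^ 2 / (2 * Q z)| ≤
      8 * δ * ∑ z, (P z - Q z) ^ 2 / (2 * Q z) := by
  have hcentered : ∑ z, (P z - Q z) = 0 := by rw [sum_sub_distrib, hsum, sub_self]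
  calc |klDiv P Q - ∑ z, (P z - Q z) ^ 2 / (2 * Q z)|
      = |∑ z, (P z * Real.log (P z / Q z) - (P z - Q z)
          - (P z - Q z) ^ 2 / (2 * Q z))| := by
        rw [klDiv, sum_sub_distrib, sum_sub_distrib, hcentered, sub_zero]
    _ ≤ ∑ z, 8 * δ * ((P z - Q z) ^ 2 / (2 * Q z)) :=
        (abs_sum_le_sum_abs _ _).trans
          (sum_le_sum fun z _ => abs_mul_log_div_sub_le hδ0 hδ (hPQ z))
    _ = 8 * δ * ∑ z, (P z - Q z) ^ 2 / (2 * Q z) := (mul_sum _ _ _).symm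

lemma one_sub_sum_le_prod_one_sub {ι : Type*} (s : Finset ι) {f : ι → ℝ}
    (h0 : ∀ i ∈ s, 0 ≤ f i) (h1 : ∀ i ∈ s, f i ≤ 1) :
    1 - ∑ i ∈ s, f i ≤ ∏ i ∈ s, (1 - f i) := by
  induction s using Finset.cons_induction with
  | empty => simp
  | cons a s _ ih =>
    rw [prod_cons, sum_cons]
    have ih' := ih (fun i hi => h0 i (mem_cons_of_mem hi))
      (fun i hi => h1 i (mem_cons_of_mem hi))
    have hfa0 := h0 a (mem_cons_self a s)
    have hfa1 := h1 a (mem_cons_self a s)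
    have hs : 0 ≤ ∑ i ∈ s, f i := sum_nonneg fun i hi => h0 i (mem_cons_of_mem hi)
    nlinarith [mul_le_mul_of_nonneg_left ih' (sub_nonneg.2 hfa1)]

def bernoulliWeight {ι : Type*} [Fintype ι] [DecidableEq ι] (p : ι → ℝ) (T : Finset ι) : ℝ :=
  (∏ k ∈ T, p k) * ∏ k ∈ Tᶜ, (1 - p k)

section bernoulliWeight

variable {ι : Type*} [Fintype ι] [DecidableEq ι] {p : ι → ℝ}

lemma sum_bernoulliWeight (p : ι → ℝ) : ∑ T, bernoulliWeight p T = 1 := by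
  have h := prod_add p (fun k => 1 - p k) univ
  simp only [add_sub_cancel, prod_const_one, powerset_univ, ← compl_eq_univ_sdiff] at h
  exact h.symm

lemma bernoulliWeight_nonneg (h0 : ∀ k, 0 ≤ p k) (h1 : ∀ k, p k ≤ 1) (T : Finset ι) :
    0 ≤ bernoulliWeight p T :=
  mul_nonneg (prod_nonneg fun k _ => h0 k) (prod_nonneg fun k _ => sub_nonneg.2 (h1 k))

lemma one_sub_bernoulliWeight_empty_le (h0 : ∀ k, 0 ≤ p k) (h1 : ∀ k, p k ≤ 1) :
    1 - bernoulliWeight p ∅ ≤ ∑ k, p k := by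
  have h := one_sub_sum_le_prod_one_sub univ (fun k _ => h0 k) (fun k _ => h1 k)
  simp only [bernoulliWeight, prod_empty, one_mul, compl_empty]
  linarith

lemma abs_sum_bernoulliWeight_mul_sub_le (h0 : ∀ k, 0 ≤ p k) (h1 : ∀ k, p k ≤ 1)
    {f : Finset ι → ℝ} (hf : ∀ T, |f T - f ∅| ≤ 1) :
    |∑ T, bernoulliWeight p T * f T - f ∅| ≤ ∑ k, p k := by
  have hw := bernoulliWeight_nonneg h0 h1
  calc |∑ T, bernoulliWeight p T * f T - f ∅|
      = |∑ T ∈ univ.erase ∅, bernoulliWeight p T * (f T - f ∅)| := by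
        rw [sum_erase _ (by simp)]
        simp only [mul_sub, sum_sub_distrib, ← sum_mul, sum_bernoulliWeight, one_mul]
    _ ≤ ∑ T ∈ univ.erase ∅, bernoulliWeight p T := by
        refine (abs_sum_le_sum_abs _ _).trans (sum_le_sum fun T _ => ?_)
        rw [abs_mul, abs_of_nonneg (hw T)]
        exact mul_le_of_le_one_right (hw T) (hf T)
    _ = 1 - bernoulliWeight p ∅ := by
        rw [sum_erase_eq_sub (mem_univ _), sum_bernoulliWeight]
    _ ≤ ∑ k, p k := one_sub_bernoulliWeight_empty_le h0 h1

end bernoulliWeight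

lemma IsDist.le_one {Z : Type*} [Fintype Z] {P : Z → ℝ} (hP : IsDist P) (z : Z) : P z ≤ 1 :=
  hP.2 ▸ single_le_sum (fun y _ => hP.1 y) (mem_univ z)

section Qmix

variable {K : ℕ} {Z : Type*} [Fintype Z] {Q : Finset (Fin K) → Z → ℝ} {ρ : Fin K → ℝ} {α : ℝ}

lemma Qmix_eq_sum_bernoulliWeight (Q : Finset (Fin K) → Z → ℝ) (ρ : Fin K → ℝ) (α : ℝ)
    (z : Z) :
    Qmix Q ρ α z = ∑ T, bernoulliWeight (fun k => ρ k * α) T * Q T z :=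
  rfl

lemma sum_Qmix (hQ : ∀ U, IsDist (Q U)) (ρ : Fin K → ℝ) (α : ℝ) : ∑ z, Qmix Q ρ α z = 1 := by
  simp only [Qmix_eq_sum_bernoulliWeight]
  rw [sum_comm]
  simp only [← mul_sum, fun T => (hQ T).2, mul_one, sum_bernoulliWeight]

lemma Qmix_eq_zero (hAC : ∀ U : Finset (Fin K), U.Nonempty → AbsCont (Q U) (Q ∅))
    {z : Z} (hz : Q ∅ z = 0) : Qmix Q ρ α z = 0 := by
  refine sum_eq_zero fun T _ => ?_
  rcases T.eq_empty_or_nonempty with rfl | hT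
  · rw [hz, mul_zero]
  · rw [hAC T hT z hz, mul_zero]

lemma abs_Qmix_sub_le (hQ : ∀ U, IsDist (Q U)) (hρ : ∀ k, ρ k ∈ Set.Icc (0 : ℝ) 1)
    (hρ1 : ∑ k, ρ k = 1) (hα0 : 0 ≤ α) (hα1 : α ≤ 1) (z : Z) :
    |Qmix Q ρ α z - Q ∅ z| ≤ α := by
  have h := abs_sum_bernoulliWeight_mul_sub_le (p := fun k => ρ k * α)
    (f := fun T => Q T z)
    (fun k => mul_nonneg (hρ k).1 hα0) (fun k => mul_le_one₀ (hρ k).2 hα0 hα1)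
    (fun T => abs_sub_le_iff.2
      ⟨by linarith [(hQ T).le_one z, (hQ ∅).1 z], by linarith [(hQ ∅).le_one z, (hQ T).1 z]⟩)
  rwa [← sum_mul, hρ1, one_mul] at h

lemma sq_div_two_mul_chiMix (hα : α ≠ 0) :
    α ^ 2 / 2 * chiMix Q ρ α = ∑ z, (Qmix Q ρ α z - Q ∅ z) ^ 2 / (2 * Q ∅ z) := by
  rw [chiMix, mul_sum]
  refine sum_congr rfl fun z _ => ?_
  calc α ^ 2 / 2 * (zetaMix Q ρ α z ^ 2 / Q ∅ z)
      = (α * ((Qmix Q ρ α z - Q ∅ z) / α)) ^ 2 / (2 * Q ∅ z) := by rw [zetaMix]; ring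
    _ = (Qmix Q ρ α z - Q ∅ z) ^ 2 / (2 * Q ∅ z) := by rw [mul_div_cancel₀ _ hα]

end Qmix

theorem covert_process_klDiv_bounds_general (K : ℕ) {Z : Type*} [Fintype Z]
    (Q : Finset (Fin K) → Z → ℝ) (hQ : ∀ U, IsDist (Q U))
    (hAC : ∀ U : Finset (Fin K), U.Nonempty → AbsCont (Q U) (Q ∅))
    (ρ : Fin K → ℝ) (hρ : ∀ k, ρ k ∈ Set.Icc (0 : ℝ) 1) (hρ1 : ∑ k, ρ k = 1)
    (α : ℕ → ℝ) (hα : ∀ n, α n ∈ Set.Ioo (0 : ℝ) 1)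
    (hα0 : Tendsto α atTop (𝓝 0)) :
    ∃ N : ℕ, ∀ n ≥ N,
      klDiv (Qmix Q ρ (α n)) (Q ∅) ≤
        (α n) ^ 2 / 2 * (1 + Real.sqrt (α n)) * chiMix Q ρ (α n) ∧
      (α n) ^ 2 / 2 * (1 - Real.sqrt (α n)) * chiMix Q ρ (α n) ≤
        klDiv (Qmix Q ρ (α n)) (Q ∅) := by
  have hsqrt : Tendsto (fun n => 8 * Real.sqrt (α n)) atTop (𝓝 0) := by
    simpa using (hα0.sqrt).const_mul 8
  have hsmall : ∀ᶠ n in atTop, ∀ z, Q ∅ z ≠ 0 → 8 * Real.sqrt (α n) ≤ Q ∅ z :=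
    eventually_all.2 fun z => by
      by_cases hz : Q ∅ z = 0
      · exact Eventually.of_forall fun _ h => absurd hz h
      · exact (hsqrt.eventually_lt_const (lt_of_le_of_ne ((hQ ∅).1 z) (Ne.symm hz))).mono
          fun _ h _ => h.le
  obtain ⟨N, hN⟩ := eventually_atTop.1 hsmall
  refine ⟨N, fun n hn => ?_⟩
  obtain ⟨ha0, ha1⟩ := hα n
  -- `α ≤ (√α / 8) Q_∅(z)` on the support, since `α = √α · √α` and `8 √α ≤ Q_∅(z)`.
  have hrel : ∀ z, |Qmix Q ρ (α n) z - Q ∅ z| ≤ Real.sqrt (α n) / 8 * Q ∅ z := fun z => by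
    by_cases hz : Q ∅ z = 0
    · simp [hz, Qmix_eq_zero hAC hz]
    · nlinarith [hN n hn z hz, abs_Qmix_sub_le hQ hρ hρ1 ha0.le ha1.le z,
        Real.mul_self_sqrt ha0.le, Real.sqrt_nonneg (α n)]
  have key := abs_klDiv_sub_le (by rw [sum_Qmix hQ, (hQ ∅).2]) (by positivity)
    (by linarith [Real.sqrt_le_one.2 ha1.le]) hrel
  rw [← sq_div_two_mul_chiMix ha0.ne', abs_le] at key
  constructor <;> linarith [key.1, key.2]

/-- for all `n` large enough,
`(αₙ²/2)(1+√αₙ)χ_{αₙ}(ρ) ≥ D(Q_{αₙ}‖Q_∅) ≥ (αₙ²/2)(1-√αₙ)χ_{αₙ}(ρ)`. -/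
theorem covert_process_klDiv_bounds (K : ℕ) (hK : 2 ≤ K) {Z : Type*} [Fintype Z]
    (Q : Finset (Fin K) → Z → ℝ) (hQ : ∀ U, IsDist (Q U))
    (hAC : ∀ U : Finset (Fin K), U.Nonempty → AbsCont (Q U) (Q ∅))
    (ρ : Fin K → ℝ) (hρ : ∀ k, ρ k ∈ Set.Icc (0 : ℝ) 1) (hρ1 : ∑ k, ρ k = 1)
    (α : ℕ → ℝ) (hα : ∀ n, α n ∈ Set.Ioo (0 : ℝ) 1)
    (hα0 : Tendsto α atTop (𝓝 0)) :
    ∃ N : ℕ, ∀ n ≥ N,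
      klDiv (Qmix Q ρ (α n)) (Q ∅) ≤
        (α n) ^ 2 / 2 * (1 + Real.sqrt (α n)) * chiMix Q ρ (α n) ∧
      (α n) ^ 2 / 2 * (1 - Real.sqrt (α n)) * chiMix Q ρ (α n) ≤
        klDiv (Qmix Q ρ (α n)) (Q ∅) :=
  covert_process_klDiv_bounds_general K Q hQ hAC ρ hρ hρ1 α hα hα0
end
end

section
/- Let P and Q be probability distributions on a finite set Z with Q(z) > 0 for all z, set Ψ(z) := P(z) − Q(z), and suppose Ψ(z)/Q(z) ≥ −1/2 for every z. Then D(P‖Q) ≥ Σ_z (Ψ(z)²/(2·Q(z))) · (1 − Ψ(z)/Q(z) − (4/3)·|Ψ(z)|/Q(z)). -/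
open Finset

noncomputable section

/-!
Writing `klFun x = x log x + 1 - x`, the constraint `∑ P = ∑ Q` gives
`D(P‖Q) = ∑ Q z · klFun (P z / Q z)`, so it suffices to bound `klFun` pointwise. For `x ≥ 0`,
`klFun x ≥ (x - 1)²/2 - (x - 1)³/6`: the difference vanishes at `x = 1` together with its
derivative `log x - (x - 1) + (x - 1)²/2`, and that derivative is increasing since its own
derivative is `(x - 1)²/x`. With `t = x - 1`, the cubic bound exceeds the claimed one by
`t² (t + 2|t|) / 3 ≥ 0`.
-/

open Real Set
open InformationTheory (klFun klFun_apply klFun_one hasDerivAt_klFun)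

lemma monotoneOn_log_sub_taylor :
    MonotoneOn (fun x ↦ log x - (x - 1) + (x - 1) ^ 2 / 2) (Ioi 0) := by
  refine monotoneOn_of_hasDerivWithinAt_nonneg (convex_Ioi 0)
    (fun x hx ↦ ((continuousAt_log (ne_of_gt hx)).sub (by fun_prop)).add (by fun_prop)
      |>.continuousWithinAt) (f' := fun x ↦ (x - 1) ^ 2 / x) (fun x hx ↦ ?_) (fun x hx ↦ ?_)
  all_goals rw [interior_Ioi] at hx
  · have hsub : HasDerivAt (fun y : ℝ ↦ y - 1) 1 x := (hasDerivAt_id' x).sub_const 1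
    have hderiv := ((hasDerivAt_log (ne_of_gt hx)).sub hsub).add ((hsub.pow 2).div_const 2)
    refine (hderiv.congr_deriv ?_).hasDerivWithinAt
    have hx0 : x ≠ 0 := ne_of_gt hx
    norm_num
    field_simp
    ring
  · exact div_nonneg (sq_nonneg _) (le_of_lt hx)

lemma hasDerivAt_klFun_sub_taylor {x : ℝ} (hx : x ≠ 0) :
    HasDerivAt (fun y ↦ klFun y - ((y - 1) ^ 2 / 2 - (y - 1) ^ 3 / 6))
      (log x - (x - 1) + (x - 1) ^ 2 / 2) x := by
  have hsub : HasDerivAt (fun y : ℝ ↦ y - 1) 1 x := (hasDerivAt_id' x).sub_const 1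
  refine ((hasDerivAt_klFun hx).sub (((hsub.pow 2).div_const 2).sub
    ((hsub.pow 3).div_const 6))).congr_deriv ?_
  norm_num
  ring

lemma sq_div_two_sub_cube_div_six_le_klFun {x : ℝ} (hx : 0 ≤ x) :
    (x - 1) ^ 2 / 2 - (x - 1) ^ 3 / 6 ≤ klFun x := by
  set g : ℝ → ℝ := fun y ↦ klFun y - ((y - 1) ^ 2 / 2 - (y - 1) ^ 3 / 6)
  have hg : Continuous g := by fun_prop
  have hg1 : g 1 = 0 := by simp [g, klFun_one]
  suffices g 1 ≤ g x by simpa [g, hg1] using this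
  rcases le_total x 1 with hx1 | hx1
  · refine antitoneOn_of_hasDerivWithinAt_nonpos (convex_Icc 0 1) hg.continuousOn
      (fun y hy ↦ (hasDerivAt_klFun_sub_taylor ?_).hasDerivWithinAt) (fun y hy ↦ ?_)
      ⟨hx, hx1⟩ ⟨zero_le_one, le_rfl⟩ hx1
    all_goals rw [interior_Icc] at hy
    · exact ne_of_gt hy.1
    · simpa using monotoneOn_log_sub_taylor hy.1 (mem_Ioi.2 one_pos) hy.2.le
  · refine monotoneOn_of_hasDerivWithinAt_nonneg (convex_Ici 1) hg.continuousOn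
      (fun y hy ↦ (hasDerivAt_klFun_sub_taylor ?_).hasDerivWithinAt) (fun y hy ↦ ?_)
      self_mem_Ici hx1 hx1
    all_goals rw [interior_Ici] at hy
    · exact ne_of_gt (one_pos.trans hy)
    · simpa using
        monotoneOn_log_sub_taylor (mem_Ioi.2 one_pos) (mem_Ioi.2 (one_pos.trans hy)) hy.le

lemma sq_div_two_mul_le_mul_klFun_div {p q : ℝ} (hp : 0 ≤ p) (hq : 0 < q) :
    (p - q) ^ 2 / (2 * q) * (1 - (p - q) / q - 4 / 3 * |p - q| / q) ≤ q * klFun (p / q) := by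
  set t := p / q - 1
  have hlhs : (p - q) ^ 2 / (2 * q) * (1 - (p - q) / q - 4 / 3 * |p - q| / q)
      = q * (t ^ 2 / 2 * (1 - t - 4 / 3 * |t|)) := by
    have hpq : p - q = q * t := by rw [mul_sub, mul_div_cancel₀ _ hq.ne', mul_one]
    rw [hpq, abs_mul, abs_of_pos hq]
    field_simp
  have hcubic : t ^ 2 / 2 * (1 - t - 4 / 3 * |t|) ≤ t ^ 2 / 2 - t ^ 3 / 6 := by
    have h2 : 0 ≤ t + 2 * |t| := by linarith [neg_abs_le t, abs_nonneg t]
    nlinarith [mul_nonneg (sq_nonneg t) h2]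
  rw [hlhs]
  exact mul_le_mul_of_nonneg_left
    (hcubic.trans (sq_div_two_sub_cube_div_six_le_klFun (div_nonneg hp hq.le))) hq.le

lemma klDiv_eq_sum_mul_klFun {Z : Type*} [Fintype Z] {P Q : Z → ℝ} (hQ : ∀ z, Q z ≠ 0)
    (hsum : ∑ z, P z = ∑ z, Q z) : klDiv P Q = ∑ z, Q z * klFun (P z / Q z) := by
  have hterm : ∀ z, Q z * klFun (P z / Q z) = P z * log (P z / Q z) + (Q z - P z) := by
    intro z
    rw [klFun_apply]
    field_simp [hQ z]
    ring
  simp only [hterm, sum_add_distrib, sum_sub_distrib, hsum, sub_self, add_zero, klDiv]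

theorem klDiv_lower_bound_general {Z : Type*} [Fintype Z] (P Q : Z → ℝ)
    (hP : IsDist P) (hQ : IsDist Q) (hQpos : ∀ z, 0 < Q z) :
    ∑ z, (P z - Q z) ^ 2 / (2 * Q z) *
        (1 - (P z - Q z) / Q z - 4 / 3 * |P z - Q z| / Q z)
      ≤ klDiv P Q := by
  rw [klDiv_eq_sum_mul_klFun (fun z ↦ (hQpos z).ne') (hP.2.trans hQ.2.symm)]
  exact sum_le_sum fun z _ ↦ sq_div_two_mul_le_mul_klFun_div (hP.1 z) (hQpos z)

/-- a pointwise quadratic lower bound on the KL divergence, where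
`Ψ(z) := P(z) - Q(z)` satisfies `Ψ(z)/Q(z) ≥ -1/2` for every `z`. -/
theorem klDiv_lower_bound {Z : Type*} [Fintype Z] (P Q : Z → ℝ)
    (hP : IsDist P) (hQ : IsDist Q) (hQpos : ∀ z, 0 < Q z)
    (h : ∀ z, -(1/2 : ℝ) ≤ (P z - Q z) / Q z) :
    ∑ z, (P z - Q z) ^ 2 / (2 * Q z) *
        (1 - (P z - Q z) / Q z - 4 / 3 * |P z - Q z| / Q z)
      ≤ klDiv P Q :=
  klDiv_lower_bound_general P Q hP hQ hQpos
end
end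

section
/- There exists a constant d > 0, depending only on the channel W_{Y|X[K]}, such that for every μ ∈ [0,1]^K the following holds: if X₁,…,X_K are independent {0,1}-valued random variables with Pr[X_k = 1] = μ_k and Y is generated from X[K] = (X₁,…,X_K) via W_{Y|X[K]}, then for every k ∈ {1,…,K}, I(X_k; Y | X[{1,…,K}∖{k}]) ≤ μ_k·D(P_k‖P_∅) + d·(max_{i} μ_i)·Σ_{i=1}^K μ_i. -/
open Finset Filter
open scoped Topology Classical

noncomputable section

/-- The binary input vector having ones exactly at the indices in `U`. -/
def xU {K : ℕ} (U : Finset (Fin K)) : Fin K → Bool :=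
  fun k => decide (k ∈ U)

/-- Bernoulli distribution on `Bool` with success probability `p`. -/
def bern (p : ℝ) : Bool → ℝ := fun b => if b then p else 1 - p

/-- `n`-fold memoryless extension of a channel `W`. -/
def prodChannel {A Z : Type*} (W : A → Z → ℝ) (n : ℕ)
    (x : Fin n → A) (z : Fin n → Z) : ℝ :=
  ∏ j, W (x j) (z j)

/-- `χ(ρ) := Σ_z (Σ_k ρ_k (Q_k(z) - Q_∅(z)))² / Q_∅(z)` for the warden channel `Wz`. -/
def chiRho {K : ℕ} {Z : Type*} [Fintype Z] (Wz : (Fin K → Bool) → Z → ℝ)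
    (ρ : Fin K → ℝ) : ℝ :=
  ∑ z, (∑ k, ρ k * (Wz (xU {k}) z - Wz (xU ∅) z)) ^ 2 / Wz (xU ∅) z

/-- The distribution `Q̂ⁿ` induced at the warden by a code with encoders `enc`, uniform
messages and uniform keys. -/
def Qhat {K n : ℕ} {Z : Type*} [Fintype Z] (Wz : (Fin K → Bool) → Z → ℝ)
    (M L : Fin K → ℕ) (enc : ∀ k, Fin (M k) × Fin (L k) → Fin n → Bool)
    (z : Fin n → Z) : ℝ :=
  (∏ k, ((M k : ℝ) * (L k : ℝ)))⁻¹ *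
    ∑ m : ∀ k, Fin (M k), ∑ l : ∀ k, Fin (L k),
      prodChannel Wz n (fun j k => enc k (m k, l k) j) z

/-- The average probability of decoding error of a code over the `n`-fold extension of
the channel `Wy`, with uniform messages and uniform keys. -/
def Pe {K n : ℕ} {Y : Type*} [Fintype Y] (Wy : (Fin K → Bool) → Y → ℝ)
    (M L : Fin K → ℕ) (enc : ∀ k, Fin (M k) × Fin (L k) → Fin n → Bool)
    (dec : (Fin n → Y) → (∀ k, Fin (L k)) → ∀ k, Fin (M k)) : ℝ :=
  (∏ k, ((M k : ℝ) * (L k : ℝ)))⁻¹ *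
    ∑ m : ∀ k, Fin (M k), ∑ l : ∀ k, Fin (L k), ∑ y : Fin n → Y,
      prodChannel Wy n (fun j k => enc k (m k, l k) j) y *
        (if dec y l = m then 0 else 1)

/-- `δₙ = D(Q̂ⁿ ‖ Q_∅^{⊗n})`. -/
def deltaN {K n : ℕ} {Z : Type*} [Fintype Z] (Wz : (Fin K → Bool) → Z → ℝ)
    (M L : Fin K → ℕ) (enc : ∀ k, Fin (M k) × Fin (L k) → Fin n → Bool) : ℝ :=
  klDiv (Qhat Wz M L enc) (fun z : Fin n → Z => ∏ j, Wz (xU ∅) (z j))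

/-- Mutual information `I(A;B)` of a finitely-supported joint distribution `p`. -/
def mutInfo {A B : Type*} [Fintype A] [Fintype B] (p : A → B → ℝ) : ℝ :=
  ∑ a, ∑ b, p a b * Real.log (p a b / ((∑ b', p a b') * (∑ a', p a' b)))

/-- Conditional mutual information `I(A;B|C)` of a finitely-supported joint
distribution `p`. -/
def condMutInfo {A B C : Type*} [Fintype A] [Fintype B] [Fintype C]
    (p : A → B → C → ℝ) : ℝ :=
  ∑ a, ∑ b, ∑ c, p a b c *
    Real.log (p a b c * (∑ a', ∑ b', p a' b' c) /
      ((∑ b', p a b' c) * (∑ a', p a' b c)))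

/-- Merge an assignment on the coordinates in `T` with one on the coordinates in `Tᶜ`. -/
def mergeT {K : ℕ} (T : Finset (Fin K)) (a : {i // i ∈ T} → Bool)
    (c : {i // i ∈ Tᶜ} → Bool) : Fin K → Bool :=
  fun i => if h : i ∈ T then a ⟨i, h⟩ else c ⟨i, Finset.mem_compl.mpr h⟩

/-- The channel `W_{Z|X[S]}` obtained from `W` by averaging the inputs outside `S`
according to the independent input distributions `π k`. -/
def margChannel {K : ℕ} {Z : Type*} [Fintype Z] (W : (Fin K → Bool) → Z → ℝ)
    (π : Fin K → Bool → ℝ) (S : Finset (Fin K))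
    (xs : {i // i ∈ S} → Bool) (z : Z) : ℝ :=
  ∑ c : {i // i ∈ Sᶜ} → Bool, (∏ i : {i // i ∈ Sᶜ}, π i.1 (c i)) * W (mergeT S xs c) z

/-!
Fix the inputs `c` other than `X_k` and let `U` be the set where `c` is one. Then `X_k` sees the
binary-input channel `0 ↦ B = P_U`, `1 ↦ A = P_{U ∪ {k}}`, and `I(X_k; Y | X[K∖{k}])` is the
average over `c` of its mutual information `m D(A‖M) + (1 - m) D(B‖M)`, where `m = μ_k` and
`M = m A + (1 - m) B`. This is always at most `1`; when `m ≤ 1/2` and `A ≪ B` it is at most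
`m D(A‖B) + 2m²(1 + χ²(A‖B))`, since `M ≥ (1 - m) B` and `-log (1 + x) ≤ -x + 2x²`. For `U = ∅`
this is the main term. For `U = {i}`, which has probability at most `μ_i`, it is `O(m)` because
`P_{k,i} ≪ P_i`. Finally, `|U| ≥ 2` has probability at most `(Σ μ_i)²`.
-/

lemma Real.sub_two_mul_sq_le_log_one_add {x : ℝ} (hx : -2⁻¹ ≤ x) :
    x - 2 * x ^ 2 ≤ Real.log (1 + x) := by
  have hpos : 0 < 1 + x := by linarith
  have h := Real.one_sub_inv_le_log_of_pos hpos
  have : x - 2 * x ^ 2 ≤ 1 - (1 + x)⁻¹ := by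
    rw [← sub_nonneg]
    have : 1 - (1 + x)⁻¹ - (x - 2 * x ^ 2) = x ^ 2 * (1 + 2 * x) / (1 + x) := by
      field_simp; ring
    rw [this]
    exact div_nonneg (mul_nonneg (sq_nonneg x) (by linarith)) hpos.le
  linarith

lemma Real.neg_log_one_sub_le {m : ℝ} (h0 : 0 ≤ m) (h1 : m ≤ 2⁻¹) :
    -Real.log (1 - m) ≤ 2 * m := by
  have h := Real.sub_two_mul_sq_le_log_one_add (x := -m) (by linarith)
  rw [← sub_eq_add_neg] at h
  nlinarith

lemma klDiv_nonneg {Z : Type*} [Fintype Z] {P Q : Z → ℝ} (hP : IsDist P) (hQ : IsDist Q)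
    (hPQ : AbsCont P Q) : 0 ≤ klDiv P Q := by
  have key : ∀ z, P z - Q z ≤ P z * Real.log (P z / Q z) := by
    intro z
    rcases (hP.1 z).eq_or_lt with hz | hz
    · simp [← hz, hQ.1 z]
    have hQz : 0 < Q z := (hQ.1 z).lt_of_ne fun h => hz.ne' (hPQ z h.symm)
    have h := Real.one_sub_inv_le_log_of_pos (div_pos hz hQz)
    rw [inv_div] at h
    calc P z - Q z = P z * (1 - Q z / P z) := by field_simp
      _ ≤ P z * Real.log (P z / Q z) := mul_le_mul_of_nonneg_left h hz.le
  have := Finset.sum_le_sum fun z (_ : z ∈ univ) => key z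
  rwa [Finset.sum_sub_distrib, hP.2, hQ.2, sub_self] at this

def chiSqDiv {Z : Type*} [Fintype Z] (P Q : Z → ℝ) : ℝ :=
  ∑ z, (P z - Q z) ^ 2 / Q z

lemma chiSqDiv_nonneg {Z : Type*} [Fintype Z] {P Q : Z → ℝ} (hQ : ∀ z, 0 ≤ Q z) :
    0 ≤ chiSqDiv P Q :=
  Finset.sum_nonneg fun z _ => div_nonneg (sq_nonneg _) (hQ z)

section Mixture

variable {Z : Type*} [Fintype Z] {A B : Z → ℝ}

lemma mul_klDiv_mix_le_negMulLog (hA : IsDist A) (hB : ∀ z, 0 ≤ B z) {s t : ℝ}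
    (hs : 0 ≤ s) (ht : 0 ≤ t) :
    s * klDiv A (fun z => s * A z + t * B z) ≤ Real.negMulLog s := by
  rcases hs.eq_or_lt with rfl | hs
  · simp
  have key : ∀ z, A z * Real.log (A z / (s * A z + t * B z)) ≤ A z * Real.log s⁻¹ := by
    intro z
    rcases (hA.1 z).eq_or_lt with hz | hz
    · simp [← hz]
    have hmix : s * A z ≤ s * A z + t * B z := le_add_of_nonneg_right (mul_nonneg ht (hB z))
    have hsA : 0 < s * A z := mul_pos hs hz
    refine mul_le_mul_of_nonneg_left (Real.log_le_log (div_pos hz (hsA.trans_le hmix)) ?_) hz.le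
    calc A z / (s * A z + t * B z) ≤ A z / (s * A z) := div_le_div_of_nonneg_left hz.le hsA hmix
      _ = s⁻¹ := by field_simp
  have := Finset.sum_le_sum fun z (_ : z ∈ univ) => key z
  rw [← Finset.sum_mul, hA.2, one_mul, Real.log_inv] at this
  rw [Real.negMulLog, klDiv]
  nlinarith

lemma klDiv_mix_le (hA : IsDist A) (hB : ∀ z, 0 ≤ B z) (hAB : AbsCont A B) {m : ℝ} (h0 : 0 ≤ m)
    (h1 : m ≤ 2⁻¹) : klDiv A (fun z => m * A z + (1 - m) * B z) ≤ klDiv A B + 2 * m := by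
  have hm : 0 < 1 - m := by linarith
  have key : ∀ z, A z * Real.log (A z / (m * A z + (1 - m) * B z)) ≤
      A z * Real.log (A z / B z) + A z * -Real.log (1 - m) := by
    intro z
    rcases (hA.1 z).eq_or_lt with hz | hz
    · simp [← hz]
    have hBz : 0 < B z := (hB z).lt_of_ne fun h => hz.ne' (hAB z h.symm)
    have hlog : Real.log (A z / (m * A z + (1 - m) * B z)) ≤ Real.log (A z / ((1 - m) * B z)) :=
      Real.log_le_log (by positivity)
        (div_le_div_of_nonneg_left hz.le (by positivity) (by nlinarith))
    have hsplit : A z / ((1 - m) * B z) = A z / B z / (1 - m) := by field_simp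
    rw [hsplit, Real.log_div (by positivity) hm.ne'] at hlog
    nlinarith
  have := Finset.sum_le_sum fun z (_ : z ∈ univ) => key z
  rw [Finset.sum_add_distrib, ← Finset.sum_mul, hA.2, one_mul] at this
  have := Real.neg_log_one_sub_le h0 h1
  simp only [klDiv] at *
  linarith

lemma klDiv_mix_le_chiSqDiv (hA : IsDist A) (hB : IsDist B) (hAB : AbsCont A B) {m : ℝ}
    (h0 : 0 ≤ m) (h1 : m ≤ 2⁻¹) :
    klDiv B (fun z => m * A z + (1 - m) * B z) ≤ 2 * m ^ 2 * chiSqDiv A B := by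
  -- second-order expansion of `-log (1 + x)` at `x = m (A - B) / B`
  have key : ∀ z, B z * Real.log (B z / (m * A z + (1 - m) * B z)) ≤
      m * (B z - A z) + 2 * m ^ 2 * ((A z - B z) ^ 2 / B z) := by
    intro z
    rcases (hB.1 z).eq_or_lt with hz | hz
    · simp [← hz, hAB z hz.symm]
    set x := m * (A z - B z) / B z with hx
    have hx2 : -2⁻¹ ≤ x := by
      rw [hx, le_div_iff₀ hz]; nlinarith [hA.1 z]
    have hmix : B z / (m * A z + (1 - m) * B z) = (1 + x)⁻¹ := by
      rw [hx]; field_simp; ring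
    have h := Real.sub_two_mul_sq_le_log_one_add hx2
    rw [hmix, Real.log_inv]
    calc B z * -Real.log (1 + x) ≤ B z * -(x - 2 * x ^ 2) :=
          mul_le_mul_of_nonneg_left (by linarith) hz.le
      _ = _ := by rw [hx]; field_simp; ring
  have := Finset.sum_le_sum fun z (_ : z ∈ univ) => key z
  rw [Finset.sum_add_distrib, ← Finset.mul_sum, ← Finset.mul_sum, Finset.sum_sub_distrib,
    hA.2, hB.2, sub_self, mul_zero, zero_add] at this
  exact this

end Mixture

def channelMutInfo {A B : Type*} [Fintype A] [Fintype B] (π : A → ℝ) (W : A → B → ℝ) : ℝ :=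
  ∑ a, π a * klDiv (W a) (fun b => ∑ a', π a' * W a' b)

lemma condMutInfo_eq_sum_channelMutInfo {A B C : Type*} [Fintype A] [Fintype B] [Fintype C]
    (π : A → ℝ) (q : C → ℝ) (W : A → C → B → ℝ) (hπ : ∑ a, π a = 1)
    (hW : ∀ a c, ∑ b, W a c b = 1) :
    condMutInfo (fun a b c => π a * q c * W a c b) =
      ∑ c, q c * channelMutInfo π (fun a => W a c) := by
  have hlog : ∀ a b c, π a * q c * W a c b *
      Real.log (π a * q c * W a c b * (∑ a', ∑ b', π a' * q c * W a' c b') /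
        ((∑ b', π a * q c * W a c b') * (∑ a', π a' * q c * W a' c b))) =
      q c * (π a * (W a c b * Real.log (W a c b / ∑ a', π a' * W a' c b))) := by
    intro a b c
    rw [← mul_assoc, mul_comm (q c)]
    rcases eq_or_ne (π a * q c) 0 with h | h
    · simp [h]
    rw [mul_assoc (π a * q c)]
    congr 3
    have hC : ∑ a', ∑ b', π a' * q c * W a' c b' = q c := by
      simp only [← Finset.mul_sum, hW, mul_one, ← Finset.sum_mul, hπ, one_mul]
    have hA : ∑ b', π a * q c * W a c b' = π a * q c := by rw [← Finset.mul_sum, hW, mul_one]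
    have hB : ∑ a', π a' * q c * W a' c b = q c * ∑ a', π a' * W a' c b := by
      rw [Finset.mul_sum]; exact Finset.sum_congr rfl fun a' _ => by ring
    rw [hC, hA, hB, show π a * q c * W a c b * q c / (π a * q c * (q c * ∑ a', π a' * W a' c b))
        = (π a * q c * q c) * W a c b / ((π a * q c * q c) * ∑ a', π a' * W a' c b) by ring,
      mul_div_mul_left _ _ (mul_ne_zero h (right_ne_zero_of_mul h))]
  simp only [condMutInfo]
  simp only [hlog]
  simp only [channelMutInfo, klDiv, Finset.mul_sum]
  exact (Finset.sum_congr rfl fun a _ => Finset.sum_comm).trans Finset.sum_comm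

lemma channelMutInfo_bern {B : Type*} [Fintype B] (m : ℝ) (W : Bool → B → ℝ) :
    channelMutInfo (bern m) W =
      m * klDiv (W true) (fun b => m * W true b + (1 - m) * W false b) +
        (1 - m) * klDiv (W false) (fun b => m * W true b + (1 - m) * W false b) := by
  simp only [channelMutInfo, Fintype.sum_bool, bern, if_true, Bool.false_eq_true, if_false]

section BinaryInput

variable {Z : Type*} [Fintype Z] {W : Bool → Z → ℝ} {m : ℝ}

lemma channelMutInfo_bern_le_one (hW : ∀ a, IsDist (W a)) (h0 : 0 ≤ m) (h1 : m ≤ 1) :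
    channelMutInfo (bern m) W ≤ 1 := by
  have hT := mul_klDiv_mix_le_negMulLog (hW true) (hW false).1 h0 (sub_nonneg.2 h1)
  have hF := mul_klDiv_mix_le_negMulLog (hW false) (hW true).1 (sub_nonneg.2 h1) h0
  have := Real.negMulLog_le_one_sub_self h0
  have := Real.negMulLog_le_one_sub_self (sub_nonneg.2 h1)
  simp only [add_comm ((1 - m) * _)] at hF
  rw [channelMutInfo_bern]
  linarith

lemma channelMutInfo_bern_le (hW : ∀ a, IsDist (W a)) (hAC : AbsCont (W true) (W false))
    (h0 : 0 ≤ m) (h1 : m ≤ 2⁻¹) :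
    channelMutInfo (bern m) W ≤
      m * klDiv (W true) (W false) + 2 * m ^ 2 * (1 + chiSqDiv (W true) (W false)) := by
  have hT := klDiv_mix_le (hW true) (hW false).1 hAC h0 h1
  have hF := klDiv_mix_le_chiSqDiv (hW true) (hW false) hAC h0 h1
  have hχ := chiSqDiv_nonneg (P := W true) (hW false).1
  rw [channelMutInfo_bern]
  nlinarith [mul_le_mul_of_nonneg_left hT h0,
    mul_le_mul_of_nonneg_left hF (by linarith : 0 ≤ 1 - m), mul_nonneg (mul_nonneg h0 (sq_nonneg m)) hχ]

end BinaryInput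

lemma bern_nonneg {p : ℝ} (hp : p ∈ Set.Icc (0 : ℝ) 1) (b : Bool) : 0 ≤ bern p b := by
  cases b <;> simp [bern, hp.1, hp.2]

section ProdBern

variable {ι : Type*} [Fintype ι]

def prodBern (μ : ι → ℝ) (c : ι → Bool) : ℝ :=
  ∏ i, bern (μ i) (c i)

lemma prodBern_nonneg {μ : ι → ℝ} (hμ : ∀ i, μ i ∈ Set.Icc (0 : ℝ) 1) (c : ι → Bool) :
    0 ≤ prodBern μ c :=
  Finset.prod_nonneg fun i _ => bern_nonneg (hμ i) (c i)

variable [DecidableEq ι]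

lemma sum_prodBern_mul_prod_ite (μ : ι → ℝ) (T : Finset ι) :
    ∑ c, prodBern μ c * ∏ i ∈ T, ((c i).toNat : ℝ) = ∏ i ∈ T, μ i := by
  have hfactor : ∀ c : ι → Bool, prodBern μ c * ∏ i ∈ T, ((c i).toNat : ℝ) =
      ∏ i, bern (μ i) (c i) * (if i ∈ T then ((c i).toNat : ℝ) else 1) := by
    intro c
    rw [prodBern, Finset.prod_mul_distrib, Fintype.prod_ite_mem]
  simp_rw [hfactor]
  rw [← Fintype.prod_sum fun i (b : Bool) =>
    bern (μ i) b * (if i ∈ T then (b.toNat : ℝ) else 1)]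
  simp_rw [Fintype.sum_bool]
  rw [← Fintype.prod_ite_mem T μ]
  refine Finset.prod_congr rfl fun i _ => ?_
  by_cases hi : i ∈ T <;> simp [hi, bern]

lemma sum_prodBern (μ : ι → ℝ) : ∑ c, prodBern μ c = 1 := by
  simpa using sum_prodBern_mul_prod_ite μ ∅

lemma le_add_mul_ones_add_mul_pairs {g : (ι → Bool) → ℝ} {α β γ : ℝ} (hα : 0 ≤ α) (hβ : 0 ≤ β)
    (hγ : 0 ≤ γ) (h0 : g (fun _ => false) ≤ α) (h1 : ∀ j, g (fun i => decide (i = j)) ≤ β)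
    (h2 : ∀ c, g c ≤ γ) (c : ι → Bool) :
    g c ≤ α + β * ∑ i, ((c i).toNat : ℝ) +
      γ * ∑ i, ∑ j, if i ≠ j then ((c i).toNat : ℝ) * (c j).toNat else 0 := by
  have hN : ∀ j, c j → 1 ≤ ∑ i, ((c i).toNat : ℝ) := fun j hj => by
    simpa [hj] using Finset.single_le_sum (f := fun i => ((c i).toNat : ℝ)) (by simp) (mem_univ j)
  have hpair : ∀ i j, 0 ≤ if i ≠ j then ((c i).toNat : ℝ) * (c j).toNat else 0 := by
    intro i j; split_ifs <;> positivity
  have hP : ∀ i j, i ≠ j → c i → c j →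
      1 ≤ ∑ i, ∑ j, if i ≠ j then ((c i).toNat : ℝ) * (c j).toNat else 0 := by
    intro i j hij hi hj
    calc (1 : ℝ) = if i ≠ j then ((c i).toNat : ℝ) * (c j).toNat else 0 := by simp [hij, hi, hj]
      _ ≤ ∑ j, if i ≠ j then ((c i).toNat : ℝ) * (c j).toNat else 0 :=
        Finset.single_le_sum (fun j _ => hpair i j) (mem_univ j)
      _ ≤ _ := Finset.single_le_sum (f := fun i => ∑ j, _)
        (fun i _ => Finset.sum_nonneg fun j _ => hpair i j) (mem_univ i)
  have hN0 : 0 ≤ ∑ i, ((c i).toNat : ℝ) := by positivity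
  have hP0 : 0 ≤ ∑ i, ∑ j, if i ≠ j then ((c i).toNat : ℝ) * (c j).toNat else 0 :=
    Finset.sum_nonneg fun i _ => Finset.sum_nonneg fun j _ => hpair i j
  by_cases hmany : ∃ i j, i ≠ j ∧ c i ∧ c j
  · obtain ⟨i, j, hij, hi, hj⟩ := hmany
    nlinarith [h2 c, hP i j hij hi hj]
  by_cases hone : ∃ j, c j
  · obtain ⟨j, hj⟩ := hone
    have hc : c = fun i => decide (i = j) := by
      funext i
      by_cases hi : i = j
      · simp [hi, hj]
      · simpa [hi] using fun h => hmany ⟨i, j, hi, h, hj⟩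
    have hgc := h1 j
    rw [← hc] at hgc
    nlinarith [hN j hj]
  · have hc : c = fun _ => false := by
      funext i; simpa using fun h => hone ⟨i, h⟩
    rw [← hc] at h0
    nlinarith

lemma sum_prodBern_mul_le {μ : ι → ℝ} (hμ : ∀ i, μ i ∈ Set.Icc (0 : ℝ) 1)
    {g : (ι → Bool) → ℝ} {α β γ : ℝ} (hα : 0 ≤ α) (hβ : 0 ≤ β) (hγ : 0 ≤ γ)
    (h0 : g (fun _ => false) ≤ α) (h1 : ∀ j, g (fun i => decide (i = j)) ≤ β)
    (h2 : ∀ c, g c ≤ γ) :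
    ∑ c, prodBern μ c * g c ≤ α + β * ∑ i, μ i + γ * (∑ i, μ i) ^ 2 := by
  set N : (ι → Bool) → ℝ := fun c => ∑ i, ((c i).toNat : ℝ)
  set P : (ι → Bool) → ℝ := fun c => ∑ i, ∑ j, if i ≠ j then ((c i).toNat : ℝ) * (c j).toNat else 0
  have hN : ∑ c, prodBern μ c * N c = ∑ i, μ i := by
    simp only [N, Finset.mul_sum]
    rw [Finset.sum_comm]
    exact Finset.sum_congr rfl fun i _ => by simpa using sum_prodBern_mul_prod_ite μ {i}
  have hP : ∑ c, prodBern μ c * P c = ∑ i, ∑ j, if i ≠ j then μ i * μ j else 0 := by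
    simp only [P, Finset.mul_sum]
    rw [Finset.sum_comm]
    refine Finset.sum_congr rfl fun i _ => ?_
    rw [Finset.sum_comm]
    refine Finset.sum_congr rfl fun j _ => ?_
    by_cases hij : i = j
    · simp [hij]
    · simpa [hij, Finset.prod_pair hij] using sum_prodBern_mul_prod_ite μ {i, j}
  calc ∑ c, prodBern μ c * g c ≤ ∑ c, prodBern μ c * (α + β * N c + γ * P c) :=
        Finset.sum_le_sum fun c _ => mul_le_mul_of_nonneg_left
          (le_add_mul_ones_add_mul_pairs hα hβ hγ h0 h1 h2 c) (prodBern_nonneg hμ c)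
    _ = α * ∑ c, prodBern μ c + β * ∑ c, prodBern μ c * N c + γ * ∑ c, prodBern μ c * P c := by
        rw [Finset.mul_sum, Finset.mul_sum, Finset.mul_sum, ← Finset.sum_add_distrib,
          ← Finset.sum_add_distrib]
        exact Finset.sum_congr rfl fun c _ => by ring
    _ ≤ α + β * ∑ i, μ i + γ * (∑ i, μ i) ^ 2 := by
        rw [sum_prodBern, hN, hP, mul_one, sq, Finset.sum_mul_sum]
        gcongr with i _ j _
        split_ifs
        · rfl
        · exact mul_nonneg (hμ i).1 (hμ j).1

end ProdBern

lemma mergeT_singleton_eq_xU {K : ℕ} {k : Fin K} {b : Bool}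
    {c : {i // i ∈ ({k} : Finset (Fin K))ᶜ} → Bool} {U : Finset (Fin K)}
    (hb : b = decide (k ∈ U)) (hc : ∀ i, c i = decide (i.1 ∈ U)) :
    mergeT {k} (fun _ => b) c = xU U := by
  funext i
  unfold mergeT xU
  split_ifs with hi
  · simpa [Finset.mem_singleton.mp hi] using hb
  · exact hc _

lemma exists_klDiv_chiSqDiv_le {K : ℕ} {Y : Type*} [Fintype Y] (Wy : (Fin K → Bool) → Y → ℝ) :
    ∃ E, 0 ≤ E ∧ ∀ U V : Finset (Fin K),
      klDiv (Wy (xU U)) (Wy (xU V)) ≤ E ∧ chiSqDiv (Wy (xU U)) (Wy (xU V)) ≤ E := by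
  obtain ⟨E, hE⟩ := Finite.bddAbove_range fun UV : Finset (Fin K) × Finset (Fin K) =>
    max (klDiv (Wy (xU UV.1)) (Wy (xU UV.2))) (chiSqDiv (Wy (xU UV.1)) (Wy (xU UV.2)))
  refine ⟨max E 0, le_max_right _ _, fun U V => ?_⟩
  have h := (max_le_iff.mp (hE ⟨(U, V), rfl⟩))
  exact ⟨h.1.trans (le_max_left _ _), h.2.trans (le_max_left _ _)⟩

section Channel

variable {K : ℕ} {Y : Type*} [Fintype Y] {Wy : (Fin K → Bool) → Y → ℝ}

lemma channelMutInfo_bern_slice_le (hWy : ∀ x, IsDist (Wy x)) {k : Fin K} {U : Finset (Fin K)}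
    (hkU : k ∉ U) (hAC : AbsCont (Wy (xU (insert k U))) (Wy (xU U)))
    {c : {i // i ∈ ({k} : Finset (Fin K))ᶜ} → Bool} (hc : ∀ i, c i = decide (i.1 ∈ U))
    {m : ℝ} (h0 : 0 ≤ m) (h1 : m ≤ 2⁻¹) :
    channelMutInfo (bern m) (fun a => Wy (mergeT {k} (fun _ => a) c)) ≤
      m * klDiv (Wy (xU (insert k U))) (Wy (xU U)) +
        2 * m ^ 2 * (1 + chiSqDiv (Wy (xU (insert k U))) (Wy (xU U))) := by
  have hT : mergeT {k} (fun _ => true) c = xU (insert k U) :=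
    mergeT_singleton_eq_xU (by simp) fun i => by
      have hik : i.1 ≠ k := Finset.mem_singleton.not.mp (Finset.mem_compl.mp i.2)
      simp [hc, hik]
  have hF : mergeT {k} (fun _ => false) c = xU U := mergeT_singleton_eq_xU (by simp [hkU]) hc
  have h := channelMutInfo_bern_le (W := fun a => Wy (mergeT {k} (fun _ => a) c))
    (fun _ => hWy _) (by simpa only [hT, hF] using hAC) h0 h1
  simpa only [hT, hF] using h

lemma sum_prodBern_mul_channelMutInfo_le_of_le_half (hWy : ∀ x, IsDist (Wy x))
    (hACy : ∀ U : Finset (Fin K), U.Nonempty → ∀ k ∈ U,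
      AbsCont (Wy (xU U)) (Wy (xU {k})) ∧ AbsCont (Wy (xU {k})) (Wy (xU ∅)))
    {E : ℝ} (hE0 : 0 ≤ E) (hE : ∀ U V : Finset (Fin K),
      klDiv (Wy (xU U)) (Wy (xU V)) ≤ E ∧ chiSqDiv (Wy (xU U)) (Wy (xU V)) ≤ E)
    {μ : Fin K → ℝ} (hμ : ∀ i, μ i ∈ Set.Icc (0 : ℝ) 1) {k : Fin K} (hm : μ k ≤ 2⁻¹) :
    ∑ c, prodBern (fun i : {i // i ∈ ({k} : Finset (Fin K))ᶜ} => μ i.1) c *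
        channelMutInfo (bern (μ k)) (fun a => Wy (mergeT {k} (fun _ => a) c)) ≤
      μ k * klDiv (Wy (xU {k})) (Wy (xU ∅)) + 2 * μ k ^ 2 * (1 + E) +
        μ k * (2 * E + 1) * ∑ i : {i // i ∈ ({k} : Finset (Fin K))ᶜ}, μ i.1 +
        (∑ i : {i // i ∈ ({k} : Finset (Fin K))ᶜ}, μ i.1) ^ 2 := by
  have hm0 := (hμ k).1
  have hAC := (hACy {k} (Finset.singleton_nonempty k) k (Finset.mem_singleton_self k)).2
  have hD := klDiv_nonneg (hWy _) (hWy _) hAC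
  refine (sum_prodBern_mul_le (fun i => hμ i.1)
    (g := fun c => channelMutInfo (bern (μ k)) (fun a => Wy (mergeT {k} (fun _ => a) c)))
    (α := μ k * klDiv (Wy (xU {k})) (Wy (xU ∅)) + 2 * μ k ^ 2 * (1 + E))
    (β := μ k * (2 * E + 1)) (add_nonneg (mul_nonneg hm0 hD) (by positivity))
    (by positivity) zero_le_one ?_ ?_ ?_).trans_eq (by ring)
  · have h := channelMutInfo_bern_slice_le hWy (Finset.notMem_empty k) (by simpa using hAC)
      (c := fun _ => false) (fun i => by simp) hm0 hm
    rw [Finset.insert_empty] at h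
    nlinarith [mul_le_mul_of_nonneg_left (hE {k} ∅).2 (sq_nonneg (μ k))]
  · intro j
    have hkj : k ∉ ({j.1} : Finset (Fin K)) := by
      simpa [eq_comm] using Finset.mem_compl.mp j.2
    have h := channelMutInfo_bern_slice_le hWy hkj
      (hACy _ (Finset.insert_nonempty _ _) j.1 (by simp)).1
      (c := fun i => decide (i = j)) (fun i => by simp) hm0 hm
    obtain ⟨hD', hχ'⟩ := hE (insert k {j.1}) {j.1}
    nlinarith [mul_le_mul_of_nonneg_left hD' hm0, mul_le_mul_of_nonneg_left hχ' (sq_nonneg (μ k)),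
      mul_nonneg (mul_nonneg hm0 (by linarith : 0 ≤ 1 + E)) (by linarith : 0 ≤ 1 - 2 * μ k)]
  · exact fun c => channelMutInfo_bern_le_one (fun _ => hWy _) hm0 (by linarith)

lemma sum_prodBern_mul_channelMutInfo_le (hWy : ∀ x, IsDist (Wy x))
    (hACy : ∀ U : Finset (Fin K), U.Nonempty → ∀ k ∈ U,
      AbsCont (Wy (xU U)) (Wy (xU {k})) ∧ AbsCont (Wy (xU {k})) (Wy (xU ∅)))
    {E : ℝ} (hE0 : 0 ≤ E) (hE : ∀ U V : Finset (Fin K),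
      klDiv (Wy (xU U)) (Wy (xU V)) ≤ E ∧ chiSqDiv (Wy (xU U)) (Wy (xU V)) ≤ E)
    {μ : Fin K → ℝ} (hμ : ∀ i, μ i ∈ Set.Icc (0 : ℝ) 1) (k : Fin K) :
    ∑ c, prodBern (fun i : {i // i ∈ ({k} : Finset (Fin K))ᶜ} => μ i.1) c *
        channelMutInfo (bern (μ k)) (fun a => Wy (mergeT {k} (fun _ => a) c)) ≤
      μ k * klDiv (Wy (xU {k})) (Wy (xU ∅)) + (4 * E + K + 4) * (⨆ i, μ i) * ∑ i, μ i := by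
  have hD := klDiv_nonneg (hWy _) (hWy _)
    (hACy {k} (Finset.singleton_nonempty k) k (Finset.mem_singleton_self k)).2
  set M := ⨆ i, μ i
  set S := ∑ i, μ i
  have hμM : ∀ i, μ i ≤ M := le_ciSup (Finite.bddAbove_range μ)
  have hμS : ∀ i, μ i ≤ S := fun i => Finset.single_le_sum (fun j _ => (hμ j).1) (mem_univ i)
  have hmMS : μ k * μ k ≤ M * S := mul_le_mul (hμM k) (hμS k) (hμ k).1 ((hμ k).1.trans (hμM k))
  have hS : 0 ≤ S := (hμ k).1.trans (hμS k)
  -- `4 E + K + 3` collects the coefficients `2 (1 + E)`, `2 E + 1` and `K` of the first case;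
  -- in the second, `1 ≤ 4 μ_k² ≤ 4 M S`.
  by_cases hm : μ k ≤ 2⁻¹
  · refine (sum_prodBern_mul_channelMutInfo_le_of_le_half hWy hACy hE0 hE hμ hm).trans ?_
    set S' := ∑ i : {i // i ∈ ({k} : Finset (Fin K))ᶜ}, μ i.1
    have hS' : 0 ≤ S' := Finset.sum_nonneg fun i _ => (hμ i.1).1
    have hS'S : S' ≤ S := by
      rw [show S' = ∑ i ∈ ({k}ᶜ : Finset (Fin K)), μ i from Finset.sum_coe_sort _ _]
      exact Finset.sum_le_univ_sum_of_nonneg fun i => (hμ i).1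
    have hSKM : S ≤ K * M := by
      simpa using Finset.sum_le_sum fun i (_ : i ∈ univ) => hμM i
    have hmS'MS : μ k * S' ≤ M * S := mul_le_mul (hμM k) hS'S hS' ((hμ k).1.trans (hμM k))
    have hS'S'MS : S' * S' ≤ K * M * S :=
      (mul_le_mul hS'S hS'S hS' hS).trans (mul_le_mul_of_nonneg_right hSKM hS)
    nlinarith
  · have hle : ∑ c, prodBern (fun i : {i // i ∈ ({k} : Finset (Fin K))ᶜ} => μ i.1) c *
        channelMutInfo (bern (μ k)) (fun a => Wy (mergeT {k} (fun _ => a) c)) ≤ 1 := by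
      refine (Finset.sum_le_sum fun c _ => mul_le_mul_of_nonneg_left
        (channelMutInfo_bern_le_one (fun _ => hWy _) (hμ k).1 (hμ k).2)
        (prodBern_nonneg (fun i => hμ i.1) c)).trans_eq ?_
      simp [sum_prodBern]
    nlinarith [mul_nonneg (hμ k).1 hD]

end Channel

theorem single_letter_condMutInfo_bound_general (K : ℕ) {Y : Type*} [Fintype Y]
    (Wy : (Fin K → Bool) → Y → ℝ) (hWy : ∀ x, IsDist (Wy x))
    (hACy : ∀ U : Finset (Fin K), U.Nonempty → ∀ k ∈ U,
      AbsCont (Wy (xU U)) (Wy (xU {k})) ∧ AbsCont (Wy (xU {k})) (Wy (xU ∅))) :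
    ∃ d > 0, ∀ μ : Fin K → ℝ, (∀ i, μ i ∈ Set.Icc (0 : ℝ) 1) → ∀ k : Fin K,
      condMutInfo (fun (b : Bool) (y : Y) (c : {i // i ∈ ({k} : Finset (Fin K))ᶜ} → Bool) =>
          bern (μ k) b * (∏ i : {i // i ∈ ({k} : Finset (Fin K))ᶜ}, bern (μ i.1) (c i)) *
            Wy (mergeT {k} (fun _ => b) c) y) ≤
        μ k * klDiv (Wy (xU {k})) (Wy (xU ∅)) + d * (⨆ i, μ i) * ∑ i, μ i := by
  obtain ⟨E, hE0, hE⟩ := exists_klDiv_chiSqDiv_le Wy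
  refine ⟨4 * E + K + 4, by positivity, fun μ hμ k => ?_⟩
  refine (condMutInfo_eq_sum_channelMutInfo (bern (μ k))
    (prodBern fun i : {i // i ∈ ({k} : Finset (Fin K))ᶜ} => μ i.1)
    (fun a c => Wy (mergeT {k} (fun _ => a) c)) (by simp [bern]) fun _ _ => (hWy _).2).trans_le ?_
  exact sum_prodBern_mul_channelMutInfo_le hWy hACy hE0 hE hμ k

/-- single-letter bound on the conditional mutual information
`I(X_k; Y | X[K∖{k}])` for independent inputs with `Pr[X_i = 1] = μ_i`:
it is at most `μ_k D(P_k‖P_∅) + d·(max_i μ_i)·Σ_i μ_i` for a constant `d` depending only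
on the channel. -/
theorem single_letter_condMutInfo_bound (K : ℕ) (hK : 2 ≤ K) {Y : Type*} [Fintype Y]
    (Wy : (Fin K → Bool) → Y → ℝ) (hWy : ∀ x, IsDist (Wy x))
    (hACy : ∀ U : Finset (Fin K), U.Nonempty → ∀ k ∈ U,
      AbsCont (Wy (xU U)) (Wy (xU {k})) ∧ AbsCont (Wy (xU {k})) (Wy (xU ∅))) :
    ∃ d > 0, ∀ μ : Fin K → ℝ, (∀ i, μ i ∈ Set.Icc (0 : ℝ) 1) → ∀ k : Fin K,
      condMutInfo (fun (b : Bool) (y : Y) (c : {i // i ∈ ({k} : Finset (Fin K))ᶜ} → Bool) =>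
          bern (μ k) b * (∏ i : {i // i ∈ ({k} : Finset (Fin K))ᶜ}, bern (μ i.1) (c i)) *
            Wy (mergeT {k} (fun _ => b) c) y) ≤
        μ k * klDiv (Wy (xU {k})) (Wy (xU ∅)) + d * (⨆ i, μ i) * ∑ i, μ i :=
  single_letter_condMutInfo_bound_general K Wy hWy hACy
end
end
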